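/- arXiv:1407.4094 — 4 statements merged into one kernel-verified Lean document; each statement's English description precedes it below -/
import Mathlib

section
/- Let G be a graph with two matchings M1 and M2 such that |M2| > |M1|. Then for any odd integer L ≥ 1, the symmetric difference M1 ⊗ M2 contains at least |M2| − (1 + 2/(L+1))·|M1| vertex-disjoint augmenting paths of length at most L that augment M1. -/
/-!
Put `A = M1 \ M2` and `B = M2 \ M1`. Every vertex meets at most one edge of each, so the graph
with edge set `A ∪ B` splits into components that are paths or even cycles alternating between
`A` and `B`. Such a component has no more `B`-edges than `A`-edges unless it is an augmenting path
for `M1`, which has exactly one more; so at least `|B| - |A|` components are augmenting paths, and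
they are vertex-disjoint. As `L` is odd, an augmenting path longer than `L` has at least
`(L + 1) / 2` edges of `A`, so at most `2|A| / (L + 1)` of them are too long.

The component of an edge `e ∈ B` is found by extending the alternating path `e` at both ends as
far as possible; it is then removed and the argument repeated on what is left.
-/

open Finset

variable {V : Type*} [Fintype V] [DecidableEq V]

/-- A matching: a set of edges (each of cardinality 2) that are pairwise disjoint. -/
def IsMatching (M : Finset (Finset V)) : Prop :=
  (∀ e ∈ M, e.card = 2) ∧ ∀ e ∈ M, ∀ f ∈ M, e ≠ f → e ∩ f = ∅

/-- The list of edges of a path given by its list of vertices. -/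
def pathEdges (vs : List V) : List (Finset V) :=
  List.zipWith (fun a b => ({a, b} : Finset V)) vs vs.tail

/-- An augmenting path for the matching `M1` inside the symmetric difference `M1 ⊗ M2`:
an alternating path (even-indexed edges in `M2 \ M1`, odd-indexed edges in `M1 \ M2`) of
odd length whose first and last edges belong to `M2` and whose endpoints are unmatched
by `M1`; applying it increases `|M1|` by one. -/
structure AugPath (M1 M2 : Finset (Finset V)) where
  verts : List V
  nodup : verts.Nodup
  len_odd : Odd (pathEdges verts).length
  alt : ∀ i, (h : i < (pathEdges verts).length) →
    if i % 2 = 0 then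
      (pathEdges verts).get ⟨i, h⟩ ∈ M2 ∧ (pathEdges verts).get ⟨i, h⟩ ∉ M1
    else
      (pathEdges verts).get ⟨i, h⟩ ∈ M1 ∧ (pathEdges verts).get ⟨i, h⟩ ∉ M2
  ends_unmatched : ∀ v : V, (verts.head? = some v ∨ verts.getLast? = some v) →
    ∀ e ∈ M1, v ∉ e

/-- The length of an augmenting path is its number of edges. -/
def AugPath.length {M1 M2 : Finset (Finset V)} (P : AugPath M1 M2) : ℕ :=
  (pathEdges P.verts).length

section
variable {α : Type*} {l : List α} {a : α}

theorem mem_head?_iff_getElem : a ∈ l.head? ↔ ∃ h : 0 < l.length, l[0] = a := by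
  simp [List.head?_eq_getElem?, List.getElem?_eq_some_iff]

theorem mem_getLast?_iff_getElem : a ∈ l.getLast? ↔ ∃ h : 0 < l.length, l[l.length - 1] = a := by
  simp [List.getLast?_eq_getElem?, List.getElem?_eq_some_iff]

end

theorem List.Pairwise.disjoint_getElem {α : Type*} {l : List (List α)}
    (h : l.Pairwise List.Disjoint) {i j : ℕ} (hi : i < l.length) (hj : j < l.length)
    (hij : i ≠ j) : l[i].Disjoint l[j] := by
  rcases Nat.lt_or_gt_of_ne hij with hlt | hlt
  · exact List.pairwise_iff_getElem.1 h i j hi hj hlt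
  · exact (List.pairwise_iff_getElem.1 h j i hj hi hlt).symm

def altSet {α : Type*} (X Y : α) (i : ℕ) : α := if i % 2 = 0 then X else Y

section
variable {α : Type*} {X Y : α}

theorem altSet_add_one (i : ℕ) : altSet X Y (i + 1) = altSet Y X i := by
  unfold altSet; split_ifs <;> first | rfl | omega

theorem altSet_add_two (i : ℕ) : altSet X Y (i + 2) = altSet X Y i := by
  simp [altSet]

theorem altSet_of_even {i : ℕ} (h : Even i) : altSet X Y i = X := by
  simp [altSet, Nat.even_iff.1 h]

theorem altSet_of_odd {i : ℕ} (h : Odd i) : altSet X Y i = Y := by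
  simp [altSet, Nat.odd_iff.1 h]

theorem altSet_altSet {n i : ℕ} (hi : i + 2 ≤ n) :
    altSet (altSet X Y (n - 2)) (altSet X Y (n - 1)) i = altSet X Y (n - 2 - i) := by
  unfold altSet; split_ifs <;> first | rfl | omega

end

theorem card_inter_toFinset_of_alt {α : Type*} [DecidableEq α] :
    ∀ {X Y : Finset α} {es : List α}, Disjoint X Y → es.Nodup →
      (∀ i (h : i < es.length), es[i] ∈ altSet X Y i) →
      (X ∩ es.toFinset).card = (es.length + 1) / 2 ∧ (Y ∩ es.toFinset).card = es.length / 2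
  | _, _, [], _, _, _ => by simp
  | X, Y, c :: es, hXY, hnd, h => by
    have hcX : c ∈ X := h 0 (by simp)
    have hc : c ∉ es := (List.nodup_cons.1 hnd).1
    obtain ⟨hY, hX⟩ := card_inter_toFinset_of_alt hXY.symm (List.nodup_cons.1 hnd).2
      fun i hi => by
        rw [← altSet_add_one, ← List.getElem_cons_succ]; exact h (i + 1) (Nat.succ_lt_succ hi)
    rw [List.toFinset_cons, inter_insert_of_mem hcX,
      inter_insert_of_notMem (disjoint_left.1 hXY hcX),
      card_insert_of_notMem (by simp [hc]), hX, hY, List.length_cons]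
    omega

section
omit [Fintype V]
variable {X Y : Finset (Finset V)}

theorem IsMatching.eq_of_mem {M : Finset (Finset V)} (hM : IsMatching M) {e f : Finset V} {v : V}
    (he : e ∈ M) (hf : f ∈ M) (hve : v ∈ e) (hvf : v ∈ f) : e = f := by
  by_contra hne
  simpa [hM.2 e he f hf hne] using mem_inter.2 ⟨hve, hvf⟩

theorem IsMatching.mono {M N : Finset (Finset V)} (hM : IsMatching M) (h : N ⊆ M) :
    IsMatching N :=
  ⟨fun e he => hM.1 e (h he), fun e he f hf => hM.2 e (h he) f (h hf)⟩

@[simp]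
theorem length_pathEdges (vs : List V) : (pathEdges vs).length = vs.length - 1 := by
  simp [pathEdges]

theorem getElem_pathEdges {vs : List V} {i : ℕ} (h : i < (pathEdges vs).length) :
    (pathEdges vs)[i] = {vs[i]'(by simp at h; omega), vs[i + 1]'(by simp at h; omega)} := by
  simp [pathEdges]

theorem mem_pathEdges_iff {vs : List V} {f : Finset V} :
    f ∈ pathEdges vs ↔ ∃ i, ∃ h : i + 1 < vs.length, f = {vs[i], vs[i + 1]} := by
  simp only [pathEdges, List.mem_iff_getElem, List.getElem_zipWith, List.getElem_tail,
    List.length_zipWith, List.length_tail]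
  constructor <;> rintro ⟨i, hi, rfl⟩ <;> exact ⟨i, by omega, rfl⟩

theorem pair_mem_pathEdges {vs : List V} {i : ℕ} (h : i + 1 < vs.length) :
    {vs[i], vs[i + 1]} ∈ pathEdges vs :=
  mem_pathEdges_iff.2 ⟨i, h, rfl⟩

theorem mem_of_mem_pathEdges {vs : List V} {f : Finset V} {v : V} (hf : f ∈ pathEdges vs)
    (hv : v ∈ f) : v ∈ vs := by
  obtain ⟨i, h, rfl⟩ := mem_pathEdges_iff.1 hf
  rcases mem_insert.1 hv with rfl | hv
  · exact List.getElem_mem _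
  · rw [mem_singleton.1 hv]; exact List.getElem_mem _

theorem exists_mem_pathEdges_of_mem {vs : List V} (hlen : 2 ≤ vs.length) {v : V} (hv : v ∈ vs) :
    ∃ f ∈ pathEdges vs, v ∈ f := by
  obtain ⟨j, hj, rfl⟩ := List.getElem_of_mem hv
  by_cases hj1 : j + 1 < vs.length
  · exact ⟨_, pair_mem_pathEdges hj1, by simp⟩
  · refine ⟨_, pair_mem_pathEdges (i := j - 1) (by omega), ?_⟩
    simp only [show j - 1 + 1 = j by omega]
    simp

theorem pathEdges_append_singleton {vs : List V} (hvs : vs ≠ []) (w : V) :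
    pathEdges (vs ++ [w]) = pathEdges vs ++ [{vs.getLast hvs, w}] := by
  have := List.length_pos_iff.2 hvs
  apply List.ext_getElem (by simp; omega)
  intro i h1 h2
  simp only [length_pathEdges, List.length_append, List.length_singleton] at h1
  simp only [getElem_pathEdges, List.getElem_append, length_pathEdges]
  split_ifs <;> first | rfl | omega |
    simp [List.getLast_eq_getElem, show i = vs.length - 1 by omega]

theorem pathEdges_reverse (vs : List V) : pathEdges vs.reverse = (pathEdges vs).reverse := by
  apply List.ext_getElem (by simp)
  intro i h1 h2
  simp only [length_pathEdges, List.length_reverse] at h1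
  simp only [getElem_pathEdges, List.getElem_reverse, length_pathEdges]
  rw [pair_comm]
  congr 2 <;> first | omega | (congr 1; omega)

theorem getElem_mem_pair_iff {vs : List V} (hnd : vs.Nodup) {i j : ℕ} (hi : i + 1 < vs.length)
    (hj : j < vs.length) : vs[j] ∈ ({vs[i], vs[i + 1]} : Finset V) ↔ j = i ∨ j = i + 1 := by
  simp [hnd.getElem_inj_iff]

theorem nodup_pathEdges {vs : List V} (hnd : vs.Nodup) : (pathEdges vs).Nodup := by
  refine List.nodup_iff_injective_getElem.2 fun ⟨i, hi⟩ ⟨j, hj⟩ hij => Fin.ext ?_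
  simp only [getElem_pathEdges, length_pathEdges] at hij hi hj ⊢
  have h1 : vs[i] ∈ ({vs[j], vs[j + 1]} : Finset V) := hij ▸ mem_insert_self _ _
  have h2 : vs[j] ∈ ({vs[i], vs[i + 1]} : Finset V) := hij ▸ mem_insert_self _ _
  rw [getElem_mem_pair_iff hnd (by omega)] at h1 h2
  omega

theorem IsMatching.altSet (hX : IsMatching X) (hY : IsMatching Y) (i : ℕ) :
    IsMatching (altSet X Y i) := by
  unfold _root_.altSet; split <;> assumption

theorem disjoint_altSet_add_one (hXY : Disjoint X Y) (i : ℕ) :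
    Disjoint (altSet X Y i) (altSet X Y (i + 1)) := by
  unfold altSet; split_ifs <;> first | omega | exact hXY | exact hXY.symm

theorem mem_altSet_or_mem_altSet_add_one {g : Finset V} (hg : g ∈ X ∪ Y) (i : ℕ) :
    g ∈ altSet X Y i ∨ g ∈ altSet X Y (i + 1) := by
  rcases Nat.mod_two_eq_zero_or_one i with h | h <;>
    simp_all [altSet, Nat.add_mod, or_comm]

theorem mem_union_of_mem_altSet {g : Finset V} {i : ℕ} (hg : g ∈ altSet X Y i) : g ∈ X ∪ Y := by
  unfold altSet at hg; split_ifs at hg <;> simp [hg]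

def Alt (X Y : Finset (Finset V)) (vs : List V) : Prop :=
  ∀ i (h : i + 1 < vs.length), {vs[i], vs[i + 1]} ∈ altSet X Y i

theorem Alt.mono {X' Y' : Finset (Finset V)} {vs : List V} (h : Alt X Y vs) (hX : X ⊆ X')
    (hY : Y ⊆ Y') : Alt X' Y' vs := fun i hi => by
  have := h i hi
  unfold altSet at this ⊢; split_ifs at this ⊢ <;> first | exact hX this | exact hY this

theorem Alt.mem_union_of_mem_pathEdges {vs : List V} (h : Alt X Y vs) {f : Finset V}
    (hf : f ∈ pathEdges vs) : f ∈ X ∪ Y := by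
  obtain ⟨i, hi, rfl⟩ := mem_pathEdges_iff.1 hf
  have := h i hi
  unfold altSet at this; split_ifs at this <;> simp [this]

theorem Alt.getElem_pathEdges_mem {vs : List V} (h : Alt X Y vs) {i : ℕ}
    (hi : i < (pathEdges vs).length) : (pathEdges vs)[i] ∈ altSet X Y i := by
  rw [getElem_pathEdges]; exact h i _

theorem Alt.append {vs : List V} (h : Alt X Y vs) (hvs : vs ≠ []) {w : V}
    (hw : {vs.getLast hvs, w} ∈ altSet X Y (vs.length - 1)) : Alt X Y (vs ++ [w]) := by
  intro i hi
  simp only [List.length_append, List.length_singleton] at hi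
  rcases Nat.lt_or_ge (i + 1) vs.length with hi' | hi'
  · simp only [List.getElem_append_left (Nat.lt_of_succ_lt hi'), List.getElem_append_left hi']
    exact h i hi'
  · obtain rfl : i = vs.length - 1 := by omega
    simp only [List.getElem_append_left (show vs.length - 1 < vs.length by omega),
      List.getElem_append_right (show vs.length ≤ vs.length - 1 + 1 by omega)]
    simpa [List.getLast_eq_getElem] using hw

theorem Alt.reverse {vs : List V} (h : Alt X Y vs) :
    Alt (altSet X Y (vs.length - 2)) (altSet X Y (vs.length - 1)) vs.reverse := by
  intro i hi
  simp only [List.length_reverse] at hi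
  rw [altSet_altSet (by omega), pair_comm]
  simpa only [List.getElem_reverse, show vs.length - 2 - i + 1 = vs.length - 1 - i by omega,
    show vs.length - 1 - (i + 1) = vs.length - 2 - i by omega] using
    h (vs.length - 2 - i) (by omega)

theorem Alt.card_inter_pathEdges (hXY : Disjoint X Y) {vs : List V} (h : Alt X Y vs)
    (hnd : vs.Nodup) :
    (X ∩ (pathEdges vs).toFinset).card = vs.length / 2 ∧
      (Y ∩ (pathEdges vs).toFinset).card = (vs.length - 1) / 2 := by
  have := card_inter_toFinset_of_alt hXY (nodup_pathEdges hnd) fun i hi =>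
    h.getElem_pathEdges_mem hi
  rw [length_pathEdges] at this
  exact ⟨this.1.trans (by omega), this.2⟩

theorem Alt.mem_pathEdges_of_mem (hX : IsMatching X) (hY : IsMatching Y) {vs : List V}
    (h : Alt X Y vs) {j : ℕ} (hj : j < vs.length) {g : Finset V} (hg : g ∈ X ∪ Y)
    (hjg : vs[j] ∈ g) :
    g ∈ pathEdges vs ∨ (j = 0 ∧ g ∈ Y) ∨ (j + 1 = vs.length ∧ g ∈ altSet X Y j) := by
  rcases mem_altSet_or_mem_altSet_add_one hg j with hg' | hg'
  · by_cases hj1 : j + 1 < vs.length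
    · left
      rw [(hX.altSet hY j).eq_of_mem hg' (h j hj1) hjg (by simp)]
      exact pair_mem_pathEdges hj1
    · exact Or.inr (Or.inr ⟨by omega, hg'⟩)
  · rcases j with _ | j
    · exact Or.inr (Or.inl ⟨rfl, hg'⟩)
    · left
      rw [altSet_add_two] at hg'
      rw [(hX.altSet hY j).eq_of_mem hg' (h j hj) hjg (by simp)]
      exact pair_mem_pathEdges hj

def Unmatched (M : Finset (Finset V)) (v : V) : Prop := ∀ e ∈ M, v ∉ e

def ClosesAltCycle (X Y : Finset (Finset V)) (vs : List V) : Prop :=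
  ∃ x ∈ vs.head?, ∃ y ∈ vs.getLast?,
    {y, x} ∈ Y ∩ altSet X Y (vs.length - 1) ∧ {y, x} ∉ pathEdges vs

theorem Alt.notMem_pathEdges (hXY : Disjoint X Y) {vs : List V} (h : Alt X Y vs)
    (hnd : vs.Nodup) {g : Finset V} (hg : g ∈ altSet X Y (vs.length - 1)) {t : V}
    (ht : t ∈ vs.getLast?) (htg : t ∈ g) : g ∉ pathEdges vs := by
  intro hmem
  obtain ⟨i, hi, rfl⟩ := mem_pathEdges_iff.1 hmem
  obtain ⟨_, rfl⟩ := mem_getLast?_iff_getElem.1 ht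
  have hlast := (getElem_mem_pair_iff hnd hi (by omega)).1 htg
  rw [show vs.length - 1 = i + 1 by omega] at hg
  exact disjoint_left.1 (disjoint_altSet_add_one hXY i) (h i hi) hg

theorem Alt.extend_or (hX : IsMatching X) (hY : IsMatching Y) (hXY : Disjoint X Y)
    {vs : List V} (h : Alt X Y vs) (hnd : vs.Nodup) (hvs : vs ≠ []) :
    (∀ t ∈ vs.getLast?, Unmatched (altSet X Y (vs.length - 1)) t) ∨ ClosesAltCycle X Y vs ∨
      ∃ w ∉ vs, Alt X Y (vs ++ [w]) := by
  by_cases hfree : ∀ t ∈ vs.getLast?, Unmatched (altSet X Y (vs.length - 1)) t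
  · exact Or.inl hfree
  right
  simp only [Unmatched, not_forall, not_not] at hfree
  obtain ⟨t, ht, g, hg, htg⟩ := hfree
  obtain ⟨w, hwt, rfl⟩ : ∃ w, w ≠ t ∧ g = {t, w} := by
    obtain ⟨a, b, hab, rfl⟩ := card_eq_two.1 ((hX.altSet hY _).1 g hg)
    rcases mem_insert.1 htg with rfl | htb
    · exact ⟨b, hab.symm, rfl⟩
    · rw [mem_singleton.1 htb, pair_comm]; exact ⟨a, hab, rfl⟩
  have hnot := h.notMem_pathEdges hXY hnd hg ht (mem_insert_self _ _)
  by_cases hw : w ∈ vs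
  · left
    obtain ⟨j, hj, rfl⟩ := List.getElem_of_mem hw
    -- Inside the path, `w` already lies on an edge of the matching of `{t, w}`; so `w` is the
    -- first vertex.
    rcases h.mem_pathEdges_of_mem hX hY hj (mem_union_of_mem_altSet hg) (by simp) with
      hmem | ⟨rfl, hgY⟩ | ⟨hjn, -⟩
    · exact absurd hmem hnot
    · exact ⟨vs[0], mem_head?_iff_getElem.2 ⟨hj, rfl⟩, t, ht, mem_inter.2 ⟨hgY, hg⟩, hnot⟩
    · obtain ⟨_, rfl⟩ := mem_getLast?_iff_getElem.1 ht
      exact absurd (by simp only [show j = vs.length - 1 by omega]) hwt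
  · right
    obtain rfl : vs.getLast hvs = t := by simpa [List.getLast?_eq_some_getLast hvs] using ht
    exact ⟨w, hw, h.append hvs hg⟩

/-- For `E ⊆ S`: `E` is a union of connected components of the graph with edge set `S`. -/
def AdjClosed (S E : Finset (Finset V)) : Prop := ∀ f ∈ E, ∀ v ∈ f, ∀ g ∈ S, v ∈ g → g ∈ E

theorem adjClosed_pathEdges {S : Finset (Finset V)} {vs : List V}
    (h : ∀ v ∈ vs, ∀ g ∈ S, v ∈ g → g ∈ pathEdges vs) : AdjClosed S (pathEdges vs).toFinset :=
  fun _ hf v hv g hg hvg =>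
    List.mem_toFinset.2 (h v (mem_of_mem_pathEdges (List.mem_toFinset.1 hf) hv) g hg hvg)

structure IsMaxAltPath (X Y : Finset (Finset V)) (vs : List V) : Prop where
  alt : Alt X Y vs
  nodup : vs.Nodup
  head_unmatched : ∀ v ∈ vs.head?, Unmatched Y v
  getLast_unmatched : ∀ v ∈ vs.getLast?, Unmatched (altSet X Y (vs.length - 1)) v

theorem IsMaxAltPath.adjClosed (hX : IsMatching X) (hY : IsMatching Y) {vs : List V}
    (h : IsMaxAltPath X Y vs) : AdjClosed (X ∪ Y) (pathEdges vs).toFinset := by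
  refine adjClosed_pathEdges fun v hv g hg hvg => ?_
  obtain ⟨j, hj, rfl⟩ := List.getElem_of_mem hv
  rcases h.alt.mem_pathEdges_of_mem hX hY hj hg hvg with hmem | ⟨rfl, hgY⟩ | ⟨hjn, hgj⟩
  · exact hmem
  · exact absurd hvg (h.head_unmatched _ (mem_head?_iff_getElem.2 ⟨hj, rfl⟩) g hgY)
  · obtain rfl : j = vs.length - 1 := by omega
    exact absurd hvg (h.getLast_unmatched _ (mem_getLast?_iff_getElem.2 ⟨by omega, rfl⟩) g hgj)

theorem ClosesAltCycle.exists_adjClosed (hX : IsMatching X) (hY : IsMatching Y)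
    (hXY : Disjoint X Y) {vs : List V} (hc : ClosesAltCycle X Y vs) (h : Alt X Y vs)
    (hnd : vs.Nodup) :
    ∃ E, (∀ f ∈ pathEdges vs, f ∈ E) ∧ AdjClosed (X ∪ Y) E ∧ (X ∩ E).card ≤ (Y ∩ E).card := by
  obtain ⟨x, hx, y, hy, hxy, hnot⟩ := hc
  obtain ⟨hxyY, hxyj⟩ := mem_inter.1 hxy
  refine ⟨insert {y, x} (pathEdges vs).toFinset, fun f hf => mem_insert_of_mem
    (List.mem_toFinset.2 hf), ?_, ?_⟩
  · intro f hf v hv g hg hvg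
    have hv' : v ∈ vs := by
      rcases mem_insert.1 hf with rfl | hf
      · rcases mem_insert.1 hv with rfl | hv
        · exact List.mem_of_mem_getLast? hy
        · exact mem_singleton.1 hv ▸ List.mem_of_mem_head? hx
      · exact mem_of_mem_pathEdges (List.mem_toFinset.1 hf) hv
    obtain ⟨j, hj, rfl⟩ := List.getElem_of_mem hv'
    rcases h.mem_pathEdges_of_mem hX hY hj hg hvg with hmem | ⟨rfl, hgY⟩ | ⟨hjn, hgj⟩
    · exact mem_insert_of_mem (List.mem_toFinset.2 hmem)
    · obtain ⟨_, rfl⟩ := mem_head?_iff_getElem.1 hx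
      rw [hY.eq_of_mem hgY hxyY hvg (by simp)]
      exact mem_insert_self _ _
    · obtain rfl : j = vs.length - 1 := by omega
      obtain ⟨_, rfl⟩ := mem_getLast?_iff_getElem.1 hy
      rw [(hX.altSet hY _).eq_of_mem hgj hxyj hvg (by simp)]
      exact mem_insert_self _ _
  · obtain ⟨hcX, hcY⟩ := h.card_inter_pathEdges hXY hnd
    rw [inter_insert_of_notMem (disjoint_right.1 hXY hxyY), inter_insert_of_mem hxyY,
      card_insert_of_notMem (by simp [hnot]), hcX, hcY]
    omega

/-- `AugPath` as a predicate on vertex lists, for disjoint `M1` and `M2`: the edges are not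
required to avoid the other matching. -/
structure IsAugPath (M1 M2 : Finset (Finset V)) (vs : List V) : Prop where
  nodup : vs.Nodup
  odd_length : Odd (pathEdges vs).length
  alt : Alt M2 M1 vs
  unmatched : ∀ v, v ∈ vs.head? ∨ v ∈ vs.getLast? → Unmatched M1 v

theorem IsAugPath.two_le_length {M1 M2 : Finset (Finset V)} {vs : List V}
    (h : IsAugPath M1 M2 vs) : 2 ≤ vs.length := by
  have := h.odd_length.pos
  simp only [length_pathEdges] at this
  omega

theorem IsMaxAltPath.isAugPath {vs : List V} (h : IsMaxAltPath X Y vs)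
    (hodd : Odd (pathEdges vs).length) : IsAugPath Y X vs where
  nodup := h.nodup
  odd_length := hodd
  alt := h.alt
  unmatched v := by
    rintro (hv | hv)
    · exact h.head_unmatched v hv
    · rw [length_pathEdges] at hodd
      simpa [altSet_of_odd hodd] using h.getLast_unmatched v hv

theorem IsMaxAltPath.card_le_or_isAugPath (hXY : Disjoint X Y) {vs : List V}
    (h : IsMaxAltPath X Y vs) :
    (X ∩ (pathEdges vs).toFinset).card ≤ (Y ∩ (pathEdges vs).toFinset).card ∨
      IsAugPath Y X vs ∧
        (X ∩ (pathEdges vs).toFinset).card = (Y ∩ (pathEdges vs).toFinset).card + 1 ∧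
        (pathEdges vs).length = 2 * (Y ∩ (pathEdges vs).toFinset).card + 1 := by
  obtain ⟨hcX, hcY⟩ := h.alt.card_inter_pathEdges hXY h.nodup
  rcases Nat.even_or_odd (pathEdges vs).length with hn | hn
  · rw [length_pathEdges, Nat.even_iff] at hn
    omega
  · refine Or.inr ⟨h.isAugPath hn, ?_⟩
    rw [length_pathEdges, Nat.odd_iff] at hn
    rw [length_pathEdges]
    omega

theorem IsAugPath.exists_mem_of_end {M1 M2 : Finset (Finset V)} {vs : List V}
    (h : IsAugPath M1 M2 vs) {v : V} (hv : v ∈ vs.head? ∨ v ∈ vs.getLast?) :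
    ∃ f ∈ M2, v ∈ f := by
  have hlen := h.two_le_length
  have hodd := Nat.odd_iff.1 (length_pathEdges vs ▸ h.odd_length)
  rcases hv with hv | hv
  · obtain ⟨_, rfl⟩ := mem_head?_iff_getElem.1 hv
    exact ⟨_, h.alt 0 (by omega), by simp⟩
  · obtain ⟨_, rfl⟩ := mem_getLast?_iff_getElem.1 hv
    have hlast := h.alt (vs.length - 2) (by omega)
    rw [altSet_of_even (Nat.even_iff.2 (by omega))] at hlast
    exact ⟨_, hlast, by simp [show vs.length - 2 + 1 = vs.length - 1 by omega]⟩

theorem IsAugPath.of_sdiff {A B E : Finset (Finset V)} {vs : List V}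
    (h : IsAugPath (A \ E) (B \ E) vs) (hE : AdjClosed (B ∪ A) E) : IsAugPath A B vs where
  nodup := h.nodup
  odd_length := h.odd_length
  alt := h.alt.mono sdiff_subset sdiff_subset
  unmatched v hv g hg hvg := by
    obtain ⟨f, hf, hvf⟩ := h.exists_mem_of_end hv
    by_cases hgE : g ∈ E
    · exact (mem_sdiff.1 hf).2 (hE g hgE v hvg f (mem_union_left _ (mem_sdiff.1 hf).1) hvf)
    · exact h.unmatched v hv g (mem_sdiff.2 ⟨hg, hgE⟩) hvg

theorem IsAugPath.disjoint_of_sdiff {A B E : Finset (Finset V)} {vs : List V}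
    (h : IsAugPath (A \ E) (B \ E) vs) (hE : AdjClosed (B ∪ A) E) {ws : List V}
    (hws : ∀ v ∈ ws, ∃ f ∈ E, v ∈ f) : ws.Disjoint vs := by
  intro v hvw hvv
  obtain ⟨f, hf, hvf⟩ := hws v hvw
  obtain ⟨g, hg, hvg⟩ := exists_mem_pathEdges_of_mem h.two_le_length hvv
  rcases mem_union.1 (h.alt.mem_union_of_mem_pathEdges hg) with hg' | hg' <;>
    exact (mem_sdiff.1 hg').2 (hE f hf v hvf g (by simp [(mem_sdiff.1 hg').1]) hvg)

def IsAugPath.toAugPath {M1 M2 : Finset (Finset V)} (hM2 : IsMatching M2) {vs : List V}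
    (h : IsAugPath (M1 \ M2) (M2 \ M1) vs) : AugPath M1 M2 where
  verts := vs
  nodup := h.nodup
  len_odd := h.odd_length
  alt i hi := by
    have := h.alt.getElem_pathEdges_mem hi
    unfold altSet at this; rw [List.get_eq_getElem]; split_ifs at this ⊢ <;> exact mem_sdiff.1 this
  ends_unmatched v hv e he hve := by
    obtain ⟨f, hf, hvf⟩ := h.exists_mem_of_end hv
    by_cases heM2 : e ∈ M2
    · exact (mem_sdiff.1 hf).2 (hM2.eq_of_mem heM2 (mem_sdiff.1 hf).1 hve hvf ▸ he)
    · exact h.unmatched v hv e (mem_sdiff.2 ⟨he, heM2⟩) hve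

end

theorem Alt.exists_extension {X Y : Finset (Finset V)} (hX : IsMatching X) (hY : IsMatching Y)
    (hXY : Disjoint X Y) {vs : List V} (h : Alt X Y vs) (hnd : vs.Nodup) (hvs : vs ≠ []) :
    ∃ ws, Alt X Y ws ∧ ws.Nodup ∧ ws.head? = vs.head? ∧
      (∀ f ∈ pathEdges vs, f ∈ pathEdges ws) ∧
      ((∀ t ∈ ws.getLast?, Unmatched (altSet X Y (ws.length - 1)) t) ∨ ClosesAltCycle X Y ws) := by
  induction hk : Fintype.card V - vs.length using Nat.strong_induction_on generalizing vs with
  | _ k ih =>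
  rcases h.extend_or hX hY hXY hnd hvs with hfree | hcyc | ⟨w, hw, h'⟩
  · exact ⟨vs, h, hnd, rfl, fun _ => id, Or.inl hfree⟩
  · exact ⟨vs, h, hnd, rfl, fun _ => id, Or.inr hcyc⟩
  · have hnd' : (vs ++ [w]).Nodup := List.nodup_append.2 ⟨hnd, List.nodup_singleton w, by
      simpa using fun a ha => (ne_of_mem_of_not_mem ha hw)⟩
    have hcard : vs.length + 1 ≤ Fintype.card V := by simpa using hnd'.length_le_card
    obtain ⟨ws, hws, hndw, hhead, hsub, hend⟩ :=
      ih (Fintype.card V - (vs.length + 1)) (by omega) h' hnd' (by simp) (by simp)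
    refine ⟨ws, hws, hndw, hhead.trans (List.head?_append_of_ne_nil _ hvs), fun f hf => hsub f ?_,
      hend⟩
    rw [pathEdges_append_singleton hvs]
    exact List.mem_append_left _ hf

theorem Alt.exists_isMaxAltPath {X Y : Finset (Finset V)} (hX : IsMatching X)
    (hY : IsMatching Y) (hXY : Disjoint X Y) {vs : List V} (h : Alt X Y vs) (hnd : vs.Nodup)
    (hvs : vs ≠ []) (hhead : ∀ v ∈ vs.head?, Unmatched Y v) :
    ∃ ms, IsMaxAltPath X Y ms ∧ ∀ f ∈ pathEdges vs, f ∈ pathEdges ms := by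
  obtain ⟨ms, hms, hndm, hhead', hsub, hlast | ⟨x, hx, _, _, hxy, _⟩⟩ :=
    h.exists_extension hX hY hXY hnd hvs
  · exact ⟨ms, ⟨hms, hndm, hhead' ▸ hhead, hlast⟩, hsub⟩
  · exact absurd (by simp) (hhead x (hhead' ▸ hx) _ (mem_inter.1 hxy).1)

theorem exists_component_of_mem {X Y : Finset (Finset V)} (hX : IsMatching X)
    (hY : IsMatching Y) (hXY : Disjoint X Y) {e : Finset V} (he : e ∈ X) :
    ∃ E, e ∈ E ∧ AdjClosed (X ∪ Y) E ∧ ((X ∩ E).card ≤ (Y ∩ E).card ∨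
      ∃ ms, IsAugPath Y X ms ∧ E = (pathEdges ms).toFinset ∧
        (X ∩ E).card = (Y ∩ E).card + 1 ∧ (pathEdges ms).length = 2 * (Y ∩ E).card + 1) := by
  obtain ⟨x, y, hxy, rfl⟩ := card_eq_two.1 (hX.1 e he)
  have h0 : Alt X Y [x, y] := fun i hi => by
    obtain rfl : i = 0 := by simp at hi; omega
    exact he
  obtain ⟨ws, hws, hnd, -, hsub, hlast | hcyc⟩ :=
    h0.exists_extension hX hY hXY (by simp [hxy]) (by simp)
  swap
  · obtain ⟨E, hsubE, hE, hcard⟩ := hcyc.exists_adjClosed hX hY hXY hws hnd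
    exact ⟨E, hsubE _ (hsub _ (by simp [pathEdges])), hE, Or.inl hcard⟩
  have hlen : 2 ≤ ws.length := by
    have := List.length_pos_of_mem (hsub {x, y} (by simp [pathEdges]))
    rw [length_pathEdges] at this; omega
  -- `ws` is stuck at its last vertex, so reversed it can only grow at the other end.
  obtain ⟨ms, hms, hsub'⟩ := hws.reverse.exists_isMaxAltPath (hX.altSet hY _) (hX.altSet hY _)
    (by simpa [show ws.length - 1 = ws.length - 2 + 1 by omega] using
      disjoint_altSet_add_one hXY (ws.length - 2))
    (List.nodup_reverse.2 hnd) (by rw [← List.length_pos_iff, List.length_reverse]; omega)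
    (by simpa using hlast)
  have hems : {x, y} ∈ (pathEdges ms).toFinset := List.mem_toFinset.2
    (hsub' _ (by rw [pathEdges_reverse, List.mem_reverse]; exact hsub _ (by simp [pathEdges])))
  rcases Nat.even_or_odd ws.length with hn | hn
  · rw [Nat.even_iff] at hn
    rw [altSet_of_even (Nat.even_iff.2 (by omega)), altSet_of_odd (Nat.odd_iff.2 (by omega))]
      at hms
    rcases hms.card_le_or_isAugPath hXY with hle | ⟨haug, hcard, hlen⟩
    · exact ⟨_, hems, hms.adjClosed hX hY, Or.inl hle⟩
    · exact ⟨_, hems, hms.adjClosed hX hY, Or.inr ⟨ms, haug, rfl, hcard, hlen⟩⟩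
  · rw [Nat.odd_iff] at hn
    rw [altSet_of_odd (Nat.odd_iff.2 (by omega)), altSet_of_even (Nat.even_iff.2 (by omega))]
      at hms
    refine ⟨_, hems, union_comm X Y ▸ hms.adjClosed hY hX, Or.inl ?_⟩
    obtain ⟨hcY, hcX⟩ := hms.alt.card_inter_pathEdges hXY.symm hms.nodup
    omega

theorem exists_short_augPaths {L : ℕ} (hL : Odd L) {A B : Finset (Finset V)}
    (hA : IsMatching A) (hB : IsMatching B) (hAB : Disjoint A B) :
    ∃ l : List (List V), (∀ vs ∈ l, IsAugPath A B vs ∧ (pathEdges vs).length ≤ L) ∧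
      l.Pairwise List.Disjoint ∧ (L + 1) * B.card ≤ (L + 1) * (A.card + l.length) + 2 * A.card := by
  induction hn : B.card using Nat.strong_induction_on generalizing A B with
  | _ n ih =>
  subst hn
  obtain rfl | ⟨e, he⟩ := B.eq_empty_or_nonempty
  · exact ⟨[], by simp, .nil, by simp⟩
  obtain ⟨E, heE, hE, hcase⟩ := exists_component_of_mem hB hA hAB.symm he
  have hcA := card_sdiff_add_card_inter A E
  have hcB := card_sdiff_add_card_inter B E
  have hq : 0 < (B ∩ E).card := card_pos.2 ⟨e, mem_inter.2 ⟨he, heE⟩⟩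
  obtain ⟨l, hl, hdisj, hbound⟩ := ih (B \ E).card (by omega) (hA.mono sdiff_subset)
    (hB.mono sdiff_subset) (hAB.mono sdiff_subset sdiff_subset) rfl
  have hl' : ∀ vs ∈ l, IsAugPath A B vs ∧ (pathEdges vs).length ≤ L :=
    fun vs hvs => ⟨(hl vs hvs).1.of_sdiff hE, (hl vs hvs).2⟩
  rw [← hcA, ← hcB]
  rcases hcase with hle | ⟨ms, hms, rfl, hqp, hlen⟩
  · refine ⟨l, hl', hdisj, ?_⟩
    nlinarith [Nat.mul_le_mul_left (L + 1) hle]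
  by_cases hshort : (pathEdges ms).length ≤ L
  · refine ⟨ms :: l, ?_, List.pairwise_cons.2 ⟨fun vs hvs => ?_, hdisj⟩, ?_⟩
    · exact List.forall_mem_cons.2 ⟨⟨hms, hshort⟩, hl'⟩
    · refine (hl vs hvs).1.disjoint_of_sdiff hE fun v hv => ?_
      obtain ⟨f, hf, hvf⟩ := exists_mem_pathEdges_of_mem hms.two_le_length hv
      exact ⟨f, List.mem_toFinset.2 hf, hvf⟩
    · simp only [List.length_cons]
      nlinarith
  · refine ⟨l, hl', hdisj, ?_⟩
    have : L + 1 ≤ 2 * (A ∩ (pathEdges ms).toFinset).card := by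
      obtain ⟨k, rfl⟩ := hL; omega
    nlinarith

theorem sub_mul_le_of_mul_le {L a b n : ℕ} (h : (L + 1) * b ≤ (L + 1) * (a + n) + 2 * a) :
    (b : ℝ) - (1 + 2 / ((L : ℝ) + 1)) * a ≤ n := by
  have hL : (0 : ℝ) < L + 1 := by positivity
  have h' : ((L + 1) * b : ℝ) ≤ (L + 1) * (a + n) + 2 * a := by exact_mod_cast h
  have key : (b : ℝ) - (1 + 2 / ((L : ℝ) + 1)) * a =
      ((L + 1) * b - (L + 1) * a - 2 * a) / (L + 1) := by
    field_simp
    ring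
  rw [key, div_le_iff₀ hL]
  linarith

theorem stmt0_general (M1 M2 : Finset (Finset V))
    (hM1 : IsMatching M1) (hM2 : IsMatching M2)
    (L : ℕ) (hLodd : Odd L) :
    ∃ (n : ℕ) (P : Fin n → AugPath M1 M2),
      Function.Injective P ∧
      (∀ i j, i ≠ j → ∀ v : V, v ∈ (P i).verts → v ∉ (P j).verts) ∧
      (∀ i, (P i).length ≤ L) ∧
      (M2.card : ℝ) - (1 + 2 / ((L : ℝ) + 1)) * M1.card ≤ (n : ℝ) := by
  obtain ⟨l, hl, hdisj, hcard⟩ := exists_short_augPaths hLodd (hM1.mono sdiff_subset)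
    (hM2.mono sdiff_subset) disjoint_sdiff_sdiff
  have hli (i : Fin l.length) := hl _ (l.getElem_mem i.2)
  let P (i : Fin l.length) : AugPath M1 M2 := (hli i).1.toAugPath hM2
  have hP (i j : Fin l.length) (hij : i ≠ j) : (P i).verts.Disjoint (P j).verts :=
    hdisj.disjoint_getElem i.2 j.2 (Fin.val_ne_of_ne hij)
  refine ⟨l.length, P, fun i j hPij => ?_, fun i j hij v hvi hvj => hP i j hij hvi hvj,
    fun i => (hli i).2, sub_mul_le_of_mul_le ?_⟩
  · by_contra hij
    obtain ⟨v, hv⟩ := List.exists_mem_of_length_pos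
      (lt_of_lt_of_le two_pos (hli i).1.two_le_length)
    exact hP i j hij hv (hPij ▸ hv)
  · have h1 := card_sdiff_add_card_inter M1 M2
    have h2 := card_sdiff_add_card_inter M2 M1
    rw [inter_comm] at h2
    nlinarith

/-- If `|M2| > |M1|`, then for any odd `L ≥ 1` the symmetric difference contains at least
`|M2| − (1 + 2/(L+1))·|M1|` vertex-disjoint augmenting paths of length at most `L`. -/
theorem stmt0 (M1 M2 : Finset (Finset V))
    (hM1 : IsMatching M1) (hM2 : IsMatching M2)
    (hlt : M1.card < M2.card) (L : ℕ) (hLodd : Odd L) (hL1 : 1 ≤ L) :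
    ∃ (n : ℕ) (P : Fin n → AugPath M1 M2),
      Function.Injective P ∧
      (∀ i j, i ≠ j → ∀ v : V, v ∈ (P i).verts → v ∉ (P j).verts) ∧
      (∀ i, (P i).length ≤ L) ∧
      (M2.card : ℝ) - (1 + 2 / ((L : ℝ) + 1)) * M1.card ≤ (n : ℝ) :=
  stmt0_general M1 M2 hM1 hM2 L hLodd
end

section
/- Let 0 < ε < 1 and 0 < p ≤ 1. Set L = 4/ε − 1 (assumed to be an odd positive integer), γ = p^{(L+1)/2}·(1 + 2/(L+1)), α = p^{(L+1)/2}, and R = log(2/ε)/p^{2/ε} (assumed a positive integer). Then (α/γ)·(1 − (1−γ)^R) ≥ 1 − ε. -/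
/-!
Write `α = p^{(L+1)/2} = p^{2/ε}` and `δ = ε/2 = 2/(L+1)`, so that `γ = α(1 + δ)` and the choice of
`R` makes `exp(-αR) = δ`. Then `α/γ = 1/(1 + δ) ≥ 1 - δ` and `(1 - γ)^R ≤ exp(-γR) ≤ exp(-αR) = δ`,
so the product is at least `(1 - δ)² ≥ 1 - 2δ = 1 - ε`.
-/

open Real

theorem one_sub_pow_le_exp_neg_mul {x : ℝ} (hx : x ≤ 1) (n : ℕ) :
    (1 - x) ^ n ≤ exp (-(x * n)) :=
  calc (1 - x) ^ n ≤ exp (-x) ^ n := pow_le_pow_left₀ (sub_nonneg.2 hx) (one_sub_le_exp_neg x) n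
    _ = exp (-(x * n)) := by rw [← exp_nat_mul]; ring_nf

/-- For `γ > 1` the bound comes from `|1 - γ| ≤ δ ≤ 1` rather than from the exponential. -/
theorem one_sub_pow_le_of_exp_neg_mul_le {γ δ : ℝ} {n : ℕ} (hγ : γ ≤ 1 + δ) (hδ : δ ≤ 1)
    (h : exp (-(γ * n)) ≤ δ) : (1 - γ) ^ n ≤ δ := by
  rcases le_or_gt γ 1 with hγ1 | hγ1
  · exact (one_sub_pow_le_exp_neg_mul hγ1 n).trans h
  rcases eq_or_ne n 0 with rfl | hn
  · simpa using h
  have habs : |1 - γ| ≤ δ := by rw [abs_of_neg (by linarith)]; linarith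
  calc (1 - γ) ^ n ≤ |1 - γ| ^ n := by rw [← abs_pow]; exact le_abs_self _
    _ ≤ |1 - γ| := pow_le_of_le_one (abs_nonneg _) (habs.trans hδ) hn
    _ ≤ δ := habs

theorem one_sub_two_mul_le_div_mul_one_sub_pow {α δ : ℝ} {n : ℕ} (hα0 : 0 < α) (hα1 : α ≤ 1)
    (hδ0 : 0 ≤ δ) (hδ1 : δ ≤ 1) (h : exp (-(α * n)) ≤ δ) :
    1 - 2 * δ ≤ α / (α * (1 + δ)) * (1 - (1 - α * (1 + δ)) ^ n) := by
  have hratio : 1 - δ ≤ α / (α * (1 + δ)) := by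
    rw [div_mul_cancel_left₀ hα0.ne', ← one_div, le_div_iff₀ (by linarith)]
    nlinarith
  have hexp : exp (-(α * (1 + δ) * n)) ≤ δ := by
    refine le_trans (exp_le_exp.2 ?_) h
    have : α * n ≤ α * (1 + δ) * n := by gcongr; nlinarith
    linarith
  have hpow : (1 - α * (1 + δ)) ^ n ≤ δ :=
    one_sub_pow_le_of_exp_neg_mul_le (by nlinarith) hδ1 hexp
  calc 1 - 2 * δ ≤ (1 - δ) * (1 - δ) := by nlinarith
    _ ≤ α / (α * (1 + δ)) * (1 - (1 - α * (1 + δ)) ^ n) :=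
      mul_le_mul hratio (by linarith) (by linarith) (by linarith)

theorem stmt5_general (ε p : ℝ) (hε0 : 0 < ε) (hε1 : ε < 1) (hp0 : 0 < p) (hp1 : p ≤ 1)
    (L R : ℕ) (hLodd : Odd L) (hL : (L : ℝ) = 4 / ε - 1)
    (hR : (R : ℝ) = Real.log (2 / ε) / Real.rpow p (2 / ε)) :
    1 - ε ≤
      (p ^ ((L + 1) / 2) / (p ^ ((L + 1) / 2) * (1 + 2 / ((L : ℝ) + 1)))) *
        (1 - (1 - p ^ ((L + 1) / 2) * (1 + 2 / ((L : ℝ) + 1))) ^ R) := by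
  have hδ : 2 / ((L : ℝ) + 1) = ε / 2 := by rw [hL]; field_simp; ring
  have hexponent : (((L + 1) / 2 : ℕ) : ℝ) = 2 / ε := by
    rw [Nat.cast_div hLodd.add_one.two_dvd two_ne_zero]
    push_cast
    rw [hL]
    ring
  have hα0 : 0 < p ^ ((L + 1) / 2) := pow_pos hp0 _
  have hrpow : p.rpow (2 / ε) = p ^ ((L + 1) / 2) := by
    rw [← hexponent]; exact Real.rpow_natCast p _
  have hexp : exp (-(p ^ ((L + 1) / 2) * R)) = ε / 2 := by
    rw [hR, hrpow, mul_div_cancel₀ _ hα0.ne', exp_neg, exp_log (by positivity)]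
    field_simp
  rw [hδ]
  convert one_sub_two_mul_le_div_mul_one_sub_pow hα0 (pow_le_one₀ hp0.le hp1) (by positivity)
    (by linarith) hexp.le using 1
  ring

/-- The key numeric inequality in the analysis of the adaptive stochastic matching
algorithm: with `L = 4/ε − 1` (odd positive integer), `α = p^{(L+1)/2}`,
`γ = p^{(L+1)/2}·(1 + 2/(L+1))` and `R = log(2/ε)/p^{2/ε}` (a positive integer),
we have `(α/γ)·(1 − (1−γ)^R) ≥ 1 − ε`. -/
theorem stmt5 (ε p : ℝ) (hε0 : 0 < ε) (hε1 : ε < 1) (hp0 : 0 < p) (hp1 : p ≤ 1)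
    (L R : ℕ) (hLodd : Odd L) (hLpos : 0 < L) (hL : (L : ℝ) = 4 / ε - 1)
    (hRpos : 0 < R) (hR : (R : ℝ) = Real.log (2 / ε) / Real.rpow p (2 / ε)) :
    1 - ε ≤
      (p ^ ((L + 1) / 2) / (p ^ ((L + 1) / 2) * (1 + 2 / ((L : ℝ) + 1)))) *
        (1 - (1 - p ^ ((L + 1) / 2) * (1 + 2 / ((L : ℝ) + 1))) ^ R) :=
  stmt5_general ε p hε0 hε1 hp0 hp1 L R hLodd hL hR
end

section
/- Let G = (U ∪ V, U × V) be the complete bipartite graph with |U| = |V| = n, and let each edge be included independently with probability p ∈ (0,1) constant. Then the expected maximum matching size of the random subgraph is at least n − o(n); more precisely, with probability at least 1 − 1/n^8, the random subgraph has a matching of size at least n − c·log n where c = 10/log(1/(1−p)). -/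
/-! By Hall's theorem with deficiency, if the random bipartite graph has no matching of size
`n - d` then some `A ⊆ U` has `|N(A)| + d < |A|`, so no edge joins `A` to `V \ N(A)`. A union bound
over the at most `4^n` pairs `(A, B)` with `|B| + d < |A|` bounds this probability by
`4^n (1-p)^{n(d+1)}`, because `|A| (n - |B|) ≥ n (d + 1)`. With `d = ⌊c log n⌋` one has
`(1-p)^{d+1} ≤ n^{-10}`, hence the failure probability is at most `n^{-8}`; the expectation bound
follows by Markov-type averaging. -/

open Finset
open scoped Classical

/-- `matchNum F` is the maximum matching size of the graph with edge set `F`. -/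
def matchNum {V : Type*} [DecidableEq V] (F : Finset (Finset V)) : ℕ :=
  (F.powerset.filter (fun M => ∀ e ∈ M, ∀ f ∈ M, e ≠ f → e ∩ f = ∅)).sup Finset.card

/-- The edge set of the complete bipartite graph on two sides of size `n`. -/
def bipEdges (n : ℕ) : Finset (Finset (Fin n ⊕ Fin n)) :=
  Finset.univ.image
    (fun q : Fin n × Fin n => ({Sum.inl q.1, Sum.inr q.2} : Finset (Fin n ⊕ Fin n)))

/-- Expected maximum matching size of the random subgraph of `G` with edge probability `p`. -/
noncomputable def expMatch {V : Type*} [DecidableEq V] (G : Finset (Finset V)) (p : ℝ) : ℝ :=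
  ∑ S ∈ G.powerset, p ^ S.card * (1 - p) ^ (G.card - S.card) * (matchNum S : ℝ)


/-- The probability that the random subset of `G`, keeping each element independently with
probability `p`, equals `S ⊆ G`. -/
noncomputable def bernoulliWeight {X : Type*} (p : ℝ) (G S : Finset X) : ℝ :=
  p ^ #S * (1 - p) ^ (#G - #S)

section BernoulliWeight

variable {X : Type*} {p : ℝ}

lemma bernoulliWeight_nonneg (hp0 : 0 ≤ p) (hp1 : p ≤ 1) (G S : Finset X) :
    0 ≤ bernoulliWeight p G S :=
  mul_nonneg (pow_nonneg hp0 _) (pow_nonneg (sub_nonneg.mpr hp1) _)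

lemma sum_bernoulliWeight (p : ℝ) (G : Finset X) :
    ∑ S ∈ G.powerset, bernoulliWeight p G S = 1 := by
  simp [bernoulliWeight, sum_pow_mul_eq_add_pow]

lemma sum_bernoulliWeight_disjoint [DecidableEq X] {G A : Finset X} (hA : A ⊆ G) :
    ∑ S ∈ G.powerset with Disjoint S A, bernoulliWeight p G S = (1 - p) ^ #A := by
  have hfilter : {S ∈ G.powerset | Disjoint S A} = (G \ A).powerset := by
    ext S
    simp [subset_sdiff, and_comm]
  have hcard : #(G \ A) = #G - #A := card_sdiff_of_subset hA
  have hfactor : ∀ S ∈ (G \ A).powerset,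
      bernoulliWeight p G S = (1 - p) ^ #A * bernoulliWeight p (G \ A) S := by
    intro S hS
    have hSA : #S ≤ #(G \ A) := card_le_card (mem_powerset.mp hS)
    have hAG : #A ≤ #G := card_le_card hA
    rw [bernoulliWeight, bernoulliWeight, show #G - #S = (#(G \ A) - #S) + #A by omega, pow_add]
    ring
  rw [hfilter, sum_congr rfl hfactor, ← mul_sum, sum_bernoulliWeight, mul_one]

lemma sum_bernoulliWeight_le_of_exists_disjoint [DecidableEq X] {ι : Type*} (hp0 : 0 ≤ p)
    (hp1 : p ≤ 1)
    (G : Finset X) (P : Finset X → Prop) [DecidablePred P] (I : Finset ι) (E : ι → Finset X)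
    (hE : ∀ i ∈ I, E i ⊆ G) (hP : ∀ S ⊆ G, P S → ∃ i ∈ I, Disjoint S (E i)) :
    ∑ S ∈ G.powerset with P S, bernoulliWeight p G S ≤ ∑ i ∈ I, (1 - p) ^ #(E i) := by
  have hw := bernoulliWeight_nonneg hp0 hp1 G
  calc ∑ S ∈ G.powerset with P S, bernoulliWeight p G S
      ≤ ∑ S ∈ G.powerset, ∑ i ∈ I with Disjoint S (E i), bernoulliWeight p G S := by
        rw [sum_filter]
        refine sum_le_sum fun S hS => ?_
        split_ifs with hPS
        · obtain ⟨i, hi, hSE⟩ := hP S (mem_powerset.mp hS) hPS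
          exact single_le_sum (f := fun _ => bernoulliWeight p G S) (fun _ _ => hw S)
            (mem_filter.mpr ⟨hi, hSE⟩)
        · exact sum_nonneg fun _ _ => hw S
    _ = ∑ i ∈ I, ∑ S ∈ G.powerset with Disjoint S (E i), bernoulliWeight p G S := by
        simp only [sum_filter]
        exact sum_comm
    _ = ∑ i ∈ I, (1 - p) ^ #(E i) :=
        sum_congr rfl fun i hi => sum_bernoulliWeight_disjoint (hE i hi)

end BernoulliWeight

lemma mul_le_sum_mul_of_le_sum_filter {ι : Type*} {s : Finset ι} {w f : ι → ℝ} {a b : ℝ}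
    (hw : ∀ x ∈ s, 0 ≤ w x) (hf : ∀ x ∈ s, 0 ≤ f x) (hb0 : 0 ≤ b)
    (hb : b ≤ ∑ x ∈ s with a ≤ f x, w x) :
    b * a ≤ ∑ x ∈ s, w x * f x := by
  have hwf : ∀ x ∈ s, 0 ≤ w x * f x := fun x hx => mul_nonneg (hw x hx) (hf x hx)
  rcases lt_or_ge a 0 with ha | ha
  · exact (mul_nonpos_of_nonneg_of_nonpos hb0 ha.le).trans (sum_nonneg hwf)
  calc b * a ≤ (∑ x ∈ s with a ≤ f x, w x) * a := mul_le_mul_of_nonneg_right hb ha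
    _ = ∑ x ∈ s with a ≤ f x, w x * a := sum_mul _ _ _
    _ ≤ ∑ x ∈ s with a ≤ f x, w x * f x :=
        sum_le_sum fun x hx => mul_le_mul_of_nonneg_left (mem_filter.mp hx).2
          (hw x (mem_filter.mp hx).1)
    _ ≤ ∑ x ∈ s, w x * f x := sum_le_sum_of_subset_of_nonneg (filter_subset _ _)
        fun x hx _ => hwf x hx

/-- Hall's theorem with deficiency `d`, proved by adjoining `d` vertices adjacent to all of `ι`. -/
lemma exists_injective_of_card_le_card_biUnion_add {ι α : Type*} [Fintype ι] [DecidableEq α]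
    (t : ι → Finset α) (d : ℕ) (ht : ∀ s : Finset ι, #s ≤ #(s.biUnion t) + d) :
    ∃ s : Finset ι, Fintype.card ι ≤ #s + d ∧
      ∃ f : s → α, Function.Injective f ∧ ∀ i : s, f i ∈ t i := by
  set t' : ι → Finset (α ⊕ Fin d) := fun i => (t i).disjSum univ
  have hall : ∀ s : Finset ι, #s ≤ #(s.biUnion t') := by
    intro s
    rcases s.eq_empty_or_nonempty with rfl | ⟨i₀, hi₀⟩
    · simp
    have hbiUnion : s.biUnion t' = (s.biUnion t).disjSum univ := by
      ext x
      rcases x with a | j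
      · simp [t']
      · simpa [t'] using ⟨i₀, hi₀⟩
    rw [hbiUnion, card_disjSum, card_univ, Fintype.card_fin]
    exact ht s
  obtain ⟨f, hf, hft⟩ := (all_card_le_biUnion_card_iff_existsInjective' t').mp hall
  refine ⟨({i | (f i).isLeft} : Finset ι), ?_, fun i => (f i).getLeft (mem_filter.mp i.2).2,
    ?_, ?_⟩
  · have hright : #{i | ¬(f i).isLeft} ≤ d := by
      calc #{i | ¬(f i).isLeft} ≤ #(univ.map (.inr : Fin d ↪ α ⊕ Fin d)) := by
            refine card_le_card_of_injOn f (fun i hi => ?_) hf.injOn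
            obtain ⟨j, hj⟩ := Sum.isRight_iff.mp (Sum.not_isLeft.mp (mem_filter.mp hi).2)
            simp [hj]
        _ = d := by simp
    have := card_filter_add_card_filter_not (s := univ) (fun i => (f i).isLeft)
    rw [card_univ] at this
    omega
  · intro i j hij
    exact Subtype.ext (hf (by simpa [Sum.getLeft_eq_iff] using hij))
  · rintro ⟨i, hi⟩
    have hfi := hft i
    rw [← Sum.inl_getLeft (f i) (mem_filter.mp hi).2, inl_mem_disjSum] at hfi
    exact hfi

section Bipartite

variable {α β : Type*} [DecidableEq α] [DecidableEq β]

def bipEdge (a : α) (b : β) : Finset (α ⊕ β) := {.inl a, .inr b}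

lemma bipEdge_injective2 : Function.Injective2 (bipEdge : α → β → Finset (α ⊕ β)) := by
  intro a a' b b' h
  have ha : (Sum.inl a : α ⊕ β) ∈ bipEdge a' b' := h ▸ by simp [bipEdge]
  have hb : (Sum.inr b : α ⊕ β) ∈ bipEdge a' b' := h ▸ by simp [bipEdge]
  simp_all [bipEdge]

lemma bipEdge_inter_bipEdge {a a' : α} {b b' : β} (ha : a ≠ a') (hb : b ≠ b') :
    bipEdge a b ∩ bipEdge a' b' = ∅ := by
  ext x
  rcases x with x | x <;> simp [bipEdge] <;> grind

def bipNbr [Fintype β] (S : Finset (Finset (α ⊕ β))) (a : α) : Finset β :=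
  {b | bipEdge a b ∈ S}

lemma card_le_matchNum_of_injective {S : Finset (Finset (α ⊕ β))} {s : Finset α} {f : s → β}
    (hf : Function.Injective f) (hS : ∀ a : s, bipEdge (a : α) (f a) ∈ S) :
    #s ≤ matchNum S := by
  set M := s.attach.image fun a => bipEdge a.1 (f a)
  have hMcard : #M = #s := by
    rw [card_image_of_injective _ fun a a' h => Subtype.ext (bipEdge_injective2 h).1, card_attach]
  have hMsub : M ⊆ S := by
    simp only [M, image_subset_iff]
    exact fun a _ => hS a
  have hMdisj : ∀ e ∈ M, ∀ e' ∈ M, e ≠ e' → e ∩ e' = ∅ := by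
    simp only [M, mem_image, mem_attach, true_and]
    rintro _ ⟨a, rfl⟩ _ ⟨a', rfl⟩ hne
    have haa' : a ≠ a' := by rintro rfl; exact hne rfl
    exact bipEdge_inter_bipEdge (Subtype.coe_ne_coe.mpr haa') (hf.ne haa')
  rw [← hMcard]
  exact le_sup (f := Finset.card) (mem_filter.mpr ⟨mem_powerset.mpr hMsub, hMdisj⟩)

lemma exists_card_biUnion_bipNbr_add_lt [Fintype α] [Fintype β] (S : Finset (Finset (α ⊕ β)))
    (d : ℕ) (h : matchNum S + d < Fintype.card α) :
    ∃ A : Finset α, #(A.biUnion (bipNbr S)) + d < #A := by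
  by_contra! hall
  obtain ⟨s, hs, f, hf, hfS⟩ := exists_injective_of_card_le_card_biUnion_add (bipNbr S) d hall
  have := card_le_matchNum_of_injective hf fun a => by simpa [bipNbr] using hfS a
  omega

def crossEdges (A : Finset α) (B : Finset β) : Finset (Finset (α ⊕ β)) :=
  (A ×ˢ B).image fun q => bipEdge q.1 q.2

lemma card_crossEdges (A : Finset α) (B : Finset β) : #(crossEdges A B) = #A * #B := by
  rw [crossEdges, card_image_of_injective _ fun q q' h => Prod.ext_iff.mpr
    (bipEdge_injective2 h), card_product]

lemma disjoint_crossEdges_compl_biUnion_bipNbr [Fintype β] (S : Finset (Finset (α ⊕ β)))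
    (A : Finset α) : Disjoint S (crossEdges A (A.biUnion (bipNbr S))ᶜ) := by
  simp only [disjoint_right, crossEdges, mem_image, mem_product, mem_compl, mem_biUnion]
  rintro _ ⟨⟨a, b⟩, ⟨ha, hb⟩, rfl⟩ hS
  exact hb ⟨a, ha, by simpa [bipNbr] using hS⟩

end Bipartite

lemma crossEdges_subset_bipEdges {n : ℕ} (A B : Finset (Fin n)) :
    crossEdges A B ⊆ bipEdges n := by
  simp only [crossEdges, bipEdges, image_subset_iff, mem_image, mem_univ, true_and]
  exact fun q _ => ⟨q, rfl⟩

lemma mul_succ_le_mul_sub {n s t d : ℕ} (hs : s ≤ n) (hts : t + d < s) :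
    n * (d + 1) ≤ s * (n - t) := by
  obtain ⟨u, rfl⟩ := Nat.exists_eq_add_of_le hs
  zify [show t ≤ s + u by omega]
  -- `s (n - t) ≥ s (u + d + 1) ≥ (d + 1) u + s (d + 1)` with `n = s + u`
  nlinarith

lemma sum_bernoulliWeight_matchNum_add_lt_le {p : ℝ} (hp0 : 0 ≤ p) (hp1 : p ≤ 1) (n d : ℕ) :
    ∑ S ∈ (bipEdges n).powerset with matchNum S + d < n, bernoulliWeight p (bipEdges n) S ≤
      4 ^ n * ((1 - p) ^ (d + 1)) ^ n := by
  set I : Finset (Finset (Fin n) × Finset (Fin n)) := {AB | #AB.2 + d < #AB.1}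
  have hunion := sum_bernoulliWeight_le_of_exists_disjoint hp0 hp1 (bipEdges n)
    (fun S => matchNum S + d < n) I (fun AB => crossEdges AB.1 AB.2ᶜ)
    (fun _ _ => crossEdges_subset_bipEdges _ _) fun S _ hS => by
      obtain ⟨A, hA⟩ := exists_card_biUnion_bipNbr_add_lt S d (by simpa using hS)
      exact ⟨(A, A.biUnion (bipNbr S)), by simpa [I] using hA,
        disjoint_crossEdges_compl_biUnion_bipNbr S A⟩
  have hterm : ∀ AB ∈ I, (1 - p) ^ #(crossEdges AB.1 AB.2ᶜ) ≤ ((1 - p) ^ (d + 1)) ^ n := by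
    intro AB hAB
    rw [card_crossEdges, card_compl, Fintype.card_fin, ← pow_mul, mul_comm (d + 1)]
    exact pow_le_pow_of_le_one (by linarith) (by linarith)
      (mul_succ_le_mul_sub (card_le_univ _ |>.trans_eq (Fintype.card_fin n))
        (mem_filter.mp hAB).2)
  have hI : (#I : ℝ) ≤ 4 ^ n := by
    have : #I ≤ 4 ^ n := (card_filter_le _ _).trans_eq <| by
      simp [Fintype.card_finset, ← mul_pow]
    exact_mod_cast this
  calc _ ≤ ∑ AB ∈ I, (1 - p) ^ #(crossEdges AB.1 AB.2ᶜ) := hunion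
    _ ≤ #I * ((1 - p) ^ (d + 1)) ^ n := by
        simpa using sum_le_card_nsmul I _ _ hterm
    _ ≤ 4 ^ n * ((1 - p) ^ (d + 1)) ^ n :=
        mul_le_mul_of_nonneg_right hI (by positivity)

lemma pow_floor_add_one_le_one_div_pow {q : ℝ} (hq0 : 0 < q) (hq1 : q < 1) (m : ℕ) {x : ℝ}
    (hx : 0 < x) :
    q ^ (⌊m / Real.log (1 / q) * Real.log x⌋₊ + 1) ≤ 1 / x ^ m := by
  set k := m / Real.log (1 / q) * Real.log x
  have hlog : Real.log (1 / q) = -Real.log q := by rw [one_div, Real.log_inv]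
  have hlogq : Real.log q < 0 := Real.log_neg hq0 hq1
  have hlogk : Real.log q * k = -(m * Real.log x) := by
    simp only [k, hlog]
    field_simp [hlogq.ne]
  have hqk : q ^ k = 1 / x ^ m := by
    rw [Real.rpow_def_of_pos hq0, hlogk, Real.exp_neg, ← Real.log_pow,
      Real.exp_log (by positivity), one_div]
  calc q ^ (⌊k⌋₊ + 1) = q ^ ((⌊k⌋₊ + 1 : ℕ) : ℝ) := (Real.rpow_natCast q _).symm
    _ ≤ q ^ k := Real.rpow_le_rpow_of_exponent_ge hq0 hq1.le (by
        push_cast; exact (Nat.lt_floor_add_one k).le)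
    _ = 1 / x ^ m := hqk

lemma add_floor_lt_of_lt_sub {m n : ℕ} {k : ℝ} (hk : 0 ≤ k) (h : (m : ℝ) < n - k) :
    m + ⌊k⌋₊ < n := by
  have hfloor := Nat.floor_le hk
  have hlt : (m + ⌊k⌋₊ : ℝ) < n := by linarith
  exact_mod_cast hlt

lemma four_pow_mul_pow_le {n : ℕ} (hn : 2 ≤ n) {x : ℝ} (hx0 : 0 ≤ x) (hx : x ≤ 1 / n ^ 10) :
    4 ^ n * x ^ n ≤ 1 / n ^ 8 := by
  have hn' : (2 : ℝ) ≤ n := by exact_mod_cast hn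
  have h4x : 4 * x ≤ 1 / n ^ 8 := by
    calc 4 * x ≤ n ^ 2 * (1 / n ^ 10) := by gcongr; nlinarith
      _ = 1 / n ^ 8 := by field_simp
  rw [← mul_pow]
  calc (4 * x) ^ n ≤ 4 * x := pow_le_of_le_one (by positivity)
        (h4x.trans (div_le_one_of_le₀ (one_le_pow₀ (by linarith)) (by positivity))) (by omega)
    _ ≤ 1 / n ^ 8 := h4x

/-- Random bipartite graphs with constant edge probability `p` have near-perfect matchings:
with probability at least `1 − 1/n^8` the random subgraph of `K_{n,n}` has a matching of
size at least `n − c·log n` with `c = 10/log(1/(1−p))`; consequently the expected maximum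
matching size is at least `n − o(n)`. -/
theorem stmt9 (p : ℝ) (hp0 : 0 < p) (hp1 : p < 1) :
    ∃ N : ℕ, ∀ n : ℕ, N ≤ n →
      (1 - 1 / (n : ℝ) ^ 8 ≤
        ∑ S ∈ (bipEdges n).powerset,
          (if (n : ℝ) - (10 / Real.log (1 / (1 - p))) * Real.log n ≤ (matchNum S : ℝ) then
            p ^ S.card * (1 - p) ^ ((bipEdges n).card - S.card) else 0)) ∧
      (1 - 1 / (n : ℝ) ^ 8) * ((n : ℝ) - (10 / Real.log (1 / (1 - p))) * Real.log n) ≤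
        expMatch (bipEdges n) p := by
  refine ⟨2, fun n hn => ?_⟩
  set k := 10 / Real.log (1 / (1 - p)) * Real.log n
  set w := bernoulliWeight p (bipEdges n)
  have hw : ∀ S, 0 ≤ w S := bernoulliWeight_nonneg hp0.le hp1.le _
  have hk : 0 ≤ k := mul_nonneg (div_nonneg (by norm_num)
    (Real.log_nonneg (one_le_one_div (by linarith) (by linarith)))) (Real.log_natCast_nonneg n)
  have hbad : ∑ S ∈ (bipEdges n).powerset with ¬(n - k ≤ matchNum S), w S ≤ 1 / n ^ 8 :=
    calc _ ≤ ∑ S ∈ (bipEdges n).powerset with matchNum S + ⌊k⌋₊ < n, w S :=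
          sum_le_sum_of_subset_of_nonneg (monotone_filter_right _ fun S _ hS =>
            add_floor_lt_of_lt_sub hk (not_le.mp hS)) fun S _ _ => hw S
      _ ≤ 4 ^ n * ((1 - p) ^ (⌊k⌋₊ + 1)) ^ n :=
          sum_bernoulliWeight_matchNum_add_lt_le hp0.le hp1.le n ⌊k⌋₊
      _ ≤ 1 / n ^ 8 := by
          have hq := pow_floor_add_one_le_one_div_pow (q := 1 - p) (by linarith) (by linarith) 10
            (x := n) (by positivity)
          rw [Nat.cast_ofNat] at hq
          exact four_pow_mul_pow_le hn (by bound) hq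
  have hgood : 1 - 1 / n ^ 8 ≤ ∑ S ∈ (bipEdges n).powerset with n - k ≤ matchNum S, w S := by
    have := sum_filter_add_sum_filter_not (bipEdges n).powerset (fun S => n - k ≤ matchNum S) w
    rw [sum_bernoulliWeight] at this
    linarith
  refine ⟨by rwa [← sum_filter], mul_le_sum_mul_of_le_sum_filter (fun S _ => hw S)
    (fun S _ => Nat.cast_nonneg _) ?_ hgood⟩
  have hn1 : (1 : ℝ) ≤ n := by exact_mod_cast (by omega : 1 ≤ n)
  exact sub_nonneg.mpr (div_le_one_of_le₀ (one_le_pow₀ hn1) (by positivity))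
end

section
/- In the complete bipartite random graph argument: for any constant p ∈ (0,1) and c = 10/log(1/(1−p)), the sum ∑_{s=1}^{n − c·log n} binom(n, s)·binom(n, s−1)·(1−p)^{s(n−s+1)} is at most e^{−(n/2)·log(1/(1−p))} for sufficiently large n. -/
/-!
Bounding both binomial coefficients by `n ^ s` turns the `s`-th summand into
`exp (s * (2 log n + (n - s + 1) log (1 - p)))`. The exponent is a convex quadratic in `s`, so on
`1 ≤ s ≤ n - c log n` it is largest at an endpoint: at `s = 1` it is `2 log n - n log (1/(1-p))`,
and at `s = n - c log n` the choice `c log (1/(1-p)) = 10` makes it `-s (8 log n + log (1/(1-p)))`.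
Once `log n` is small against `n`, both are at most `-(n/2) log (1/(1-p)) - log n`, and the
`n` summands add up to the claimed bound.
-/

open Finset Filter Real

theorem mul_add_mul_le_max {a b s X : ℝ} (ha : 0 ≤ a) (h1 : 1 ≤ s) (hX : s ≤ X) :
    s * (b + a * s) ≤ max (b + a) (X * (b + a * X)) := by
  rcases le_total 0 (b + a * (X + s)) with hpos | hneg
  · have : X * (b + a * X) - s * (b + a * s) = (X - s) * (b + a * (X + s)) := by ring
    nlinarith [le_max_right (b + a) (X * (b + a * X)), mul_nonneg (sub_nonneg.2 hX) hpos]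
  · have : s * (b + a * s) - (b + a) = (s - 1) * (b + a * (s + 1)) := by ring
    have hneg' : b + a * (s + 1) ≤ 0 := by nlinarith
    nlinarith [le_max_left (b + a) (X * (b + a * X)),
      mul_nonpos_of_nonneg_of_nonpos (sub_nonneg.2 h1) hneg']

theorem choose_mul_choose_pred_mul_pow_le {q : ℝ} (hq : 0 < q) {n s : ℕ} (hn : 1 ≤ n)
    (hs : s ≤ n) :
    (n.choose s : ℝ) * n.choose (s - 1) * q ^ (s * (n - s + 1))
      ≤ exp (s * (2 * log n + (n - s + 1) * log q)) := by
  have hn' : (1 : ℝ) ≤ n := by exact_mod_cast hn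
  have hchoose : (n.choose s : ℝ) * n.choose (s - 1) ≤ (n : ℝ) ^ s * (n : ℝ) ^ s := by
    have h₁ : (n.choose s : ℝ) ≤ (n : ℝ) ^ s := by exact_mod_cast Nat.choose_le_pow n s
    have h₂ : (n.choose (s - 1) : ℝ) ≤ (n : ℝ) ^ s :=
      (by exact_mod_cast Nat.choose_le_pow n (s - 1) : (n.choose (s - 1) : ℝ) ≤ _).trans
        (pow_le_pow_right₀ hn' (Nat.sub_le s 1))
    exact mul_le_mul h₁ h₂ (Nat.cast_nonneg _) (by positivity)
  calc (n.choose s : ℝ) * n.choose (s - 1) * q ^ (s * (n - s + 1))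
      ≤ (n : ℝ) ^ s * (n : ℝ) ^ s * q ^ (s * (n - s + 1)) :=
        mul_le_mul_of_nonneg_right hchoose (by positivity)
    _ = exp (s * log n + s * log n + ((s * (n - s + 1) : ℕ) : ℝ) * log q) := by
        rw [exp_add, exp_add, exp_nat_mul, exp_nat_mul, exp_log (by positivity), exp_log hq]
    _ = exp (s * (2 * log n + (n - s + 1) * log q)) := by
        push_cast [Nat.cast_sub hs]; ring_nf

theorem quadratic_exponent_le {L ℓ n s : ℝ} (hL : 0 < L) (hℓ : 0 ≤ ℓ) (hn : 1 ≤ n)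
    (hcℓ : 10 / L * ℓ ≤ n / 2) (hs1 : 1 ≤ s) (hsX : s ≤ n - 10 / L * ℓ) :
    s * (2 * ℓ + (n - s + 1) * -L) ≤ -(n / 2) * L - ℓ := by
  have hℓn : 10 * ℓ ≤ L * (n / 2) := by
    simpa [field] using mul_le_mul_of_nonneg_left hcℓ hL.le
  have hslope : 2 * ℓ - L * (n + 1) + L * (n - 10 / L * ℓ) = -(8 * ℓ + L) := by
    field_simp; ring
  calc s * (2 * ℓ + (n - s + 1) * -L) = s * ((2 * ℓ - L * (n + 1)) + L * s) := by ring
    _ ≤ max (2 * ℓ - L * (n + 1) + L)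
          ((n - 10 / L * ℓ) * (2 * ℓ - L * (n + 1) + L * (n - 10 / L * ℓ))) :=
        mul_add_mul_le_max hL.le hs1 hsX
    _ ≤ -(n / 2) * L - ℓ := by
        rw [hslope]
        refine max_le (by linarith) ?_
        nlinarith [mul_le_mul_of_nonneg_right (show n / 2 ≤ n - 10 / L * ℓ by linarith)
          (by positivity : 0 ≤ 8 * ℓ + L)]

theorem eventually_log_natCast_le_mul {ε : ℝ} (hε : 0 < ε) :
    ∀ᶠ n : ℕ in atTop, log n ≤ ε * n := by
  filter_upwards [(tendsto_natCast_atTop_atTop (R := ℝ)).eventually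
    (isLittleO_log_id_atTop.def hε)] with n hn
  simpa [abs_of_nonneg (Nat.cast_nonneg (α := ℝ) n)] using (le_abs_self _).trans hn

theorem sum_Icc_le_exp_of_le_exp_sub_log {f : ℕ → ℝ} {M n : ℕ} {y : ℝ} (hn : 0 < n)
    (hM : M ≤ n) (hf : ∀ s ∈ Icc 1 M, f s ≤ exp (y - log n)) :
    ∑ s ∈ Icc 1 M, f s ≤ exp y := by
  have hn' : (0 : ℝ) < n := by exact_mod_cast hn
  calc ∑ s ∈ Icc 1 M, f s ≤ #(Icc 1 M) • exp (y - log n) := sum_le_card_nsmul _ _ _ hf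
    _ = M * exp (y - log n) := by simp
    _ ≤ n * exp (y - log n) := by gcongr
    _ = exp y := by rw [exp_sub, exp_log hn']; field_simp

/-- The union-bound computation in the near-perfect-matching proof for random bipartite
graphs: for constant `p ∈ (0,1)` and `c = 10/log(1/(1−p))`, the sum
`∑_{s=1}^{n − c·log n} C(n,s)·C(n,s−1)·(1−p)^{s(n−s+1)}` is at most
`e^{−(n/2)·log(1/(1−p))}` for sufficiently large `n`. -/
theorem stmt10 (p : ℝ) (hp0 : 0 < p) (hp1 : p < 1) :
    ∃ N : ℕ, ∀ n : ℕ, N ≤ n →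
      ∑ s ∈ Finset.Icc 1 ⌊(n : ℝ) - (10 / Real.log (1 / (1 - p))) * Real.log n⌋₊,
          ((n.choose s : ℝ) * (n.choose (s - 1) : ℝ) * (1 - p) ^ (s * (n - s + 1)))
        ≤ Real.exp (-((n : ℝ) / 2) * Real.log (1 / (1 - p))) := by
  have hq : 0 < 1 - p := by linarith
  set L := log (1 / (1 - p)) with hLdef
  have hL : 0 < L := log_pos (by rw [one_lt_div hq]; linarith)
  have hlogq : log (1 - p) = -L := by rw [hLdef, one_div, log_inv, neg_neg]
  rw [← eventually_atTop]
  filter_upwards [eventually_log_natCast_le_mul (by positivity : 0 < L / 20),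
    eventually_ge_atTop 1] with n hℓn hn
  have hn' : (1 : ℝ) ≤ n := by exact_mod_cast hn
  have hℓ : 0 ≤ log (n : ℝ) := log_nonneg hn'
  have hcℓ : 10 / L * log n ≤ (n : ℝ) / 2 := by
    calc 10 / L * log n ≤ 10 / L * (L / 20 * n) := by gcongr
      _ = n / 2 := by field_simp; norm_num
  have hX : (0 : ℝ) ≤ n - 10 / L * log n := by linarith
  have hMn : ⌊(n : ℝ) - 10 / L * log n⌋₊ ≤ n :=
    Nat.floor_le_of_le (by linarith [(by positivity : (0 : ℝ) ≤ 10 / L * log n)])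
  refine sum_Icc_le_exp_of_le_exp_sub_log hn hMn fun s hs => ?_
  obtain ⟨hs1, hsM⟩ := mem_Icc.1 hs
  have hsX : (s : ℝ) ≤ n - 10 / L * log n := (Nat.cast_le.2 hsM).trans (Nat.floor_le hX)
  calc (n.choose s : ℝ) * n.choose (s - 1) * (1 - p) ^ (s * (n - s + 1))
      ≤ exp (s * (2 * log n + (n - s + 1) * log (1 - p))) :=
        choose_mul_choose_pred_mul_pow_le hq hn (hsM.trans hMn)
    _ ≤ exp (-((n : ℝ) / 2) * L - log n) := by
        rw [exp_le_exp, hlogq]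
        exact quadratic_exponent_le hL hℓ hn' hcℓ (by exact_mod_cast hs1) hsX
end
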